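/- arXiv:1508.00690 — 5 statements merged into one kernel-verified Lean document; each statement's English description precedes it below -/
import Mathlib

section
/- Let F be a field, d ≥ 1, and A ≤ M(n,F) ⊗ M(d,F) a subspace satisfying (I ⊗ M(d,F)) A (I ⊗ M(d,F)) = A. If A has an s-shrunk subspace U ≤ F^n ⊗ F^d, then the subspace U' spanned by (I ⊗ M(d,F)) U is an s'-shrunk subspace for A with s' ≥ s and d | s'; moreover U' = U₀ ⊗ F^d for some U₀ ≤ F^n. -/
/-!
Since `𝓐` is stable under multiplication by `I ⊗ M(d,F)` on both sides, `𝓐(U') = 𝓐(U)`, and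
both `U'` and `𝓐(U)` are invariant under `I ⊗ M(d,F)`. An invariant subspace `W` is
`W₀ ⊗ F^d`, where `W₀` is spanned by the slices `w(·, k)` of its vectors, so `d ∣ dim W`. Hence
`dim U' - dim 𝓐(U') = d (dim U₀ - dim W₀) ≥ dim U - dim 𝓐(U) ≥ s`.
-/

open Matrix Module Kronecker

section TensorTop

variable {R ι κ : Type*} [CommSemiring R]

def tensorTop (κ : Type*) (W₀ : Submodule R (ι → R)) : Submodule R (ι × κ → R) :=
  Submodule.span R {v | ∃ u₀ ∈ W₀, ∃ e : κ → R, v = fun p => u₀ p.1 * e p.2}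

variable [Fintype κ] [DecidableEq κ] {W₀ : Submodule R (ι → R)}

theorem mem_tensorTop_iff {w : ι × κ → R} :
    w ∈ tensorTop κ W₀ ↔ ∀ k, (fun i => w (i, k)) ∈ W₀ := by
  refine ⟨fun hw k => ?_, fun hw => ?_⟩
  · induction hw using Submodule.span_induction with
    | mem _ h =>
      obtain ⟨u₀, hu₀, e, rfl⟩ := h
      convert W₀.smul_mem (e k) hu₀ using 1
      ext i
      exact mul_comm _ _
    | zero => exact W₀.zero_mem
    | add _ _ _ _ hx hy => exact W₀.add_mem hx hy
    | smul c _ _ hx => exact W₀.smul_mem c hx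
  · have hsum : w = ∑ k, fun p => (fun i => w (i, k)) p.1 * (Pi.single k 1 : κ → R) p.2 := by
      ext p
      simp [Finset.sum_apply, Pi.single_apply]
    rw [hsum]
    exact Submodule.sum_mem _ fun k _ => Submodule.subset_span ⟨_, hw k, _, rfl⟩

def tensorTopEquiv : tensorTop κ W₀ ≃ₗ[R] (κ → W₀) where
  toFun w k := ⟨fun i => w.1 (i, k), mem_tensorTop_iff.1 w.2 k⟩
  invFun f := ⟨fun p => (f p.2 : ι → R) p.1, mem_tensorTop_iff.2 fun k => (f k).2⟩
  map_add' _ _ := rfl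
  map_smul' _ _ := rfl
  left_inv _ := rfl
  right_inv _ := rfl

theorem finrank_tensorTop {F : Type*} [Field F] {W₀ : Submodule F (ι → F)}
    [FiniteDimensional F W₀] : finrank F (tensorTop κ W₀) = Fintype.card κ * finrank F W₀ := by
  rw [tensorTopEquiv.finrank_eq, Module.finrank_pi_fintype, Finset.sum_const, smul_eq_mul,
    Finset.card_univ]

end TensorTop

section Invariant

variable {R ι κ : Type*} [CommSemiring R] [Fintype ι] [DecidableEq ι] [Fintype κ]

theorem one_kronecker_mulVec_apply (Y : Matrix κ κ R) (w : ι × κ → R) (p : ι × κ) :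
    (((1 : Matrix ι ι R) ⊗ₖ Y) *ᵥ w) p = ∑ l, Y p.2 l * w (p.1, l) := by
  simp [mulVec, dotProduct, Fintype.sum_prod_type, kroneckerMap_apply, one_apply, ite_mul]

variable [DecidableEq κ]

theorem eq_tensorTop_of_forall_one_kronecker_mulVec_mem {W : Submodule R (ι × κ → R)}
    (hW : ∀ Y : Matrix κ κ R, ∀ w ∈ W, ((1 : Matrix ι ι R) ⊗ₖ Y) *ᵥ w ∈ W) :
    W = tensorTop κ (⨆ k, W.map (LinearMap.funLeft R R (·, k))) := by
  refine le_antisymm (fun w hw => mem_tensorTop_iff.2 fun k =>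
    Submodule.mem_iSup_of_mem k (Submodule.mem_map_of_mem hw)) ?_
  refine Submodule.span_le.2 ?_
  rintro _ ⟨u₀, hu₀, e, rfl⟩
  refine Submodule.iSup_induction _ (motive := fun u => (fun p => u p.1 * e p.2) ∈ W) hu₀
    ?_ (by convert W.zero_mem; simp) fun u v hu hv => by
      convert W.add_mem hu hv using 1; ext; simp [add_mul]
  rintro k _ ⟨w, hw, rfl⟩
  -- `Y = e ⊗ δₖ` sends `w` to `w(·, k) ⊗ e`
  convert hW (of fun a b => if b = k then e a else 0) w hw using 1
  ext p
  simp [one_kronecker_mulVec_apply, mul_comm]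

theorem exists_eq_tensorTop_of_forall_one_kronecker_mulVec_mem {W : Submodule R (ι × κ → R)}
    (hW : ∀ Y : Matrix κ κ R, ∀ w ∈ W, ((1 : Matrix ι ι R) ⊗ₖ Y) *ᵥ w ∈ W) :
    ∃ W₀ : Submodule R (ι → R), W = tensorTop κ W₀ :=
  ⟨_, eq_tensorTop_of_forall_one_kronecker_mulVec_mem hW⟩

end Invariant

section MatrixImage

variable {R ι : Type*} [CommSemiring R] [Fintype ι]

def matrixImage (𝓐 : Set (Matrix ι ι R)) (U : Submodule R (ι → R)) : Submodule R (ι → R) :=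
  Submodule.span R {w | ∃ A ∈ 𝓐, ∃ u ∈ U, w = A *ᵥ u}

variable {𝓐 𝓑 : Set (Matrix ι ι R)} {U : Submodule R (ι → R)}

theorem mulVec_mem_matrixImage {A : Matrix ι ι R} (hA : A ∈ 𝓐) {u : ι → R} (hu : u ∈ U) :
    A *ᵥ u ∈ matrixImage 𝓐 U :=
  Submodule.subset_span ⟨A, hA, u, hu, rfl⟩

theorem matrixImage_le_iff {W : Submodule R (ι → R)} :
    matrixImage 𝓐 U ≤ W ↔ ∀ A ∈ 𝓐, ∀ u ∈ U, A *ᵥ u ∈ W := by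
  refine ⟨fun h A hA u hu => h (mulVec_mem_matrixImage hA hu), fun h => Submodule.span_le.2 ?_⟩
  rintro _ ⟨A, hA, u, hu, rfl⟩
  exact h A hA u hu

theorem mulVec_mem_matrixImage_of_mul_mem {B : Matrix ι ι R} (hB : ∀ A ∈ 𝓐, B * A ∈ 𝓐)
    {w : ι → R} (hw : w ∈ matrixImage 𝓐 U) : B *ᵥ w ∈ matrixImage 𝓐 U := by
  refine (matrixImage_le_iff (W := (matrixImage 𝓐 U).comap B.mulVecLin)).2 ?_ hw
  intro A hA u hu
  simpa [mulVec_mulVec] using mulVec_mem_matrixImage (hB A hA) hu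

theorem matrixImage_range {α : Type*} (f : α → Matrix ι ι R) :
    matrixImage (Set.range f) U = Submodule.span R {w | ∃ a, ∃ u ∈ U, w = f a *ᵥ u} := by
  simp [matrixImage]

variable [DecidableEq ι]

theorem le_matrixImage_of_one_mem (h𝓑 : 1 ∈ 𝓑) : U ≤ matrixImage 𝓑 U := fun u hu => by
  simpa using mulVec_mem_matrixImage h𝓑 hu

theorem matrixImage_matrixImage_of_mul_mem (h𝓑 : 1 ∈ 𝓑) (h : ∀ A ∈ 𝓐, ∀ B ∈ 𝓑, A * B ∈ 𝓐) :
    matrixImage 𝓐 (matrixImage 𝓑 U) = matrixImage 𝓐 U := by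
  refine le_antisymm (matrixImage_le_iff.2 fun A hA u hu => ?_) (Submodule.span_mono ?_)
  · refine (matrixImage_le_iff (W := (matrixImage 𝓐 U).comap A.mulVecLin)).2 ?_ hu
    intro B hB v hv
    simpa [mulVec_mulVec] using mulVec_mem_matrixImage (h A hA B hB) hv
  · rintro _ ⟨A, hA, u, hu, rfl⟩
    exact ⟨A, hA, u, le_matrixImage_of_one_mem h𝓑 hu, rfl⟩

end MatrixImage

theorem stmt6_general {F : Type*} [Field F] {n d : ℕ}
    (𝓐 : Submodule F (Matrix (Fin n × Fin d) (Fin n × Fin d) F))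
    (hbimod : Submodule.span F
      {M : Matrix (Fin n × Fin d) (Fin n × Fin d) F |
        ∃ X : Matrix (Fin d) (Fin d) F, ∃ A ∈ 𝓐, ∃ Y : Matrix (Fin d) (Fin d) F,
          M = ((1 : Matrix (Fin n) (Fin n) F) ⊗ₖ X) * A *
              ((1 : Matrix (Fin n) (Fin n) F) ⊗ₖ Y)} = 𝓐)
    (s : ℕ) (U : Submodule F (Fin n × Fin d → F))
    (hshrunk : finrank F (Submodule.span F
        {w : Fin n × Fin d → F | ∃ A ∈ 𝓐, ∃ u ∈ U, w = A.mulVec u}) + s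
      ≤ finrank F U) :
    ∃ s' : ℕ, s ≤ s' ∧ d ∣ s' ∧
      (finrank F (Submodule.span F
          {w : Fin n × Fin d → F | ∃ A ∈ 𝓐, ∃ u ∈
            Submodule.span F {u' : Fin n × Fin d → F |
              ∃ Y : Matrix (Fin d) (Fin d) F, ∃ v ∈ U,
                u' = ((1 : Matrix (Fin n) (Fin n) F) ⊗ₖ Y).mulVec v},
            w = A.mulVec u}) + s'
        ≤ finrank F (Submodule.span F {u' : Fin n × Fin d → F |
            ∃ Y : Matrix (Fin d) (Fin d) F, ∃ v ∈ U,
              u' = ((1 : Matrix (Fin n) (Fin n) F) ⊗ₖ Y).mulVec v})) ∧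
      (∃ U₀ : Submodule F (Fin n → F),
        Submodule.span F {u' : Fin n × Fin d → F |
            ∃ Y : Matrix (Fin d) (Fin d) F, ∃ v ∈ U,
              u' = ((1 : Matrix (Fin n) (Fin n) F) ⊗ₖ Y).mulVec v}
          = Submodule.span F {v : Fin n × Fin d → F |
              ∃ u₀ ∈ U₀, ∃ e : Fin d → F, v = fun p => u₀ p.1 * e p.2}) := by
  set 𝓚 := Set.range ((1 : Matrix (Fin n) (Fin n) F) ⊗ₖ · : Matrix (Fin d) (Fin d) F → _)
  rw [← matrixImage_range]
  change finrank F (matrixImage 𝓐 U) + s ≤ finrank F U at hshrunk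
  change ∃ s', s ≤ s' ∧ d ∣ s' ∧ finrank F (matrixImage 𝓐 (matrixImage 𝓚 U)) + s' ≤
    finrank F (matrixImage 𝓚 U) ∧ ∃ U₀, matrixImage 𝓚 U = tensorTop (Fin d) U₀
  have h𝓐 : ∀ X, ∀ A ∈ 𝓐, ∀ Y, (1 ⊗ₖ X) * A * (1 ⊗ₖ Y) ∈ 𝓐 := fun X A hA Y =>
    hbimod ▸ Submodule.subset_span ⟨X, A, hA, Y, rfl⟩
  have h𝓚 : 1 ∈ 𝓚 := ⟨1, one_kronecker_one⟩
  have h𝓐𝓚 : ∀ A ∈ 𝓐, ∀ K ∈ 𝓚, A * K ∈ 𝓐 := by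
    rintro A hA _ ⟨Y, rfl⟩
    simpa using h𝓐 1 A hA Y
  have h𝓚𝓐 : ∀ Y, ∀ A ∈ 𝓐, (1 ⊗ₖ Y) * A ∈ 𝓐 := fun Y A hA => by
    simpa using h𝓐 Y A hA 1
  have h𝓚𝓚 : ∀ Y, ∀ K ∈ 𝓚, (1 ⊗ₖ Y) * K ∈ 𝓚 := by
    rintro Y _ ⟨Y', rfl⟩
    exact ⟨Y * Y', by rw [← mul_kronecker_mul, one_mul]⟩
  rw [matrixImage_matrixImage_of_mul_mem h𝓚 h𝓐𝓚]
  obtain ⟨W₀, hW₀⟩ : ∃ W₀, matrixImage 𝓐 U = tensorTop (Fin d) W₀ :=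
    exists_eq_tensorTop_of_forall_one_kronecker_mulVec_mem fun Y _ hw =>
      mulVec_mem_matrixImage_of_mul_mem (h𝓚𝓐 Y) hw
  obtain ⟨U₀, hU₀⟩ : ∃ U₀, matrixImage 𝓚 U = tensorTop (Fin d) U₀ :=
    exists_eq_tensorTop_of_forall_one_kronecker_mulVec_mem fun Y _ hw =>
      mulVec_mem_matrixImage_of_mul_mem (h𝓚𝓚 Y) hw
  have hdim := hshrunk.trans (Submodule.finrank_mono (le_matrixImage_of_one_mem h𝓚 (U := U)))
  rw [hW₀, hU₀, finrank_tensorTop, finrank_tensorTop, Fintype.card_fin] at hdim ⊢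
  exact ⟨d * finrank F U₀ - d * finrank F W₀, by omega, Dvd.intro _ (Nat.mul_sub ..), by omega,
    U₀, rfl⟩

/-- If `𝓐 ≤ M(n,F) ⊗ M(d,F)` satisfies `(I ⊗ M(d,F)) 𝓐 (I ⊗ M(d,F)) = 𝓐` and
has an `s`-shrunk subspace `U`, then the span `U'` of `(I ⊗ M(d,F)) U` is an
`s'`-shrunk subspace with `s' ≥ s` divisible by `d`, and `U' = U₀ ⊗ F^d` for
some `U₀ ≤ F^n`. -/
theorem stmt6 {F : Type*} [Field F] {n d : ℕ} (hd : 1 ≤ d)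
    (𝓐 : Submodule F (Matrix (Fin n × Fin d) (Fin n × Fin d) F))
    (hbimod : Submodule.span F
      {M : Matrix (Fin n × Fin d) (Fin n × Fin d) F |
        ∃ X : Matrix (Fin d) (Fin d) F, ∃ A ∈ 𝓐, ∃ Y : Matrix (Fin d) (Fin d) F,
          M = ((1 : Matrix (Fin n) (Fin n) F) ⊗ₖ X) * A *
              ((1 : Matrix (Fin n) (Fin n) F) ⊗ₖ Y)} = 𝓐)
    (s : ℕ) (U : Submodule F (Fin n × Fin d → F))
    (hshrunk : finrank F (Submodule.span F
        {w : Fin n × Fin d → F | ∃ A ∈ 𝓐, ∃ u ∈ U, w = A.mulVec u}) + s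
      ≤ finrank F U) :
    ∃ s' : ℕ, s ≤ s' ∧ d ∣ s' ∧
      (finrank F (Submodule.span F
          {w : Fin n × Fin d → F | ∃ A ∈ 𝓐, ∃ u ∈
            Submodule.span F {u' : Fin n × Fin d → F |
              ∃ Y : Matrix (Fin d) (Fin d) F, ∃ v ∈ U,
                u' = ((1 : Matrix (Fin n) (Fin n) F) ⊗ₖ Y).mulVec v},
            w = A.mulVec u}) + s'
        ≤ finrank F (Submodule.span F {u' : Fin n × Fin d → F |
            ∃ Y : Matrix (Fin d) (Fin d) F, ∃ v ∈ U,
              u' = ((1 : Matrix (Fin n) (Fin n) F) ⊗ₖ Y).mulVec v})) ∧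
      (∃ U₀ : Submodule F (Fin n → F),
        Submodule.span F {u' : Fin n × Fin d → F |
            ∃ Y : Matrix (Fin d) (Fin d) F, ∃ v ∈ U,
              u' = ((1 : Matrix (Fin n) (Fin n) F) ⊗ₖ Y).mulVec v}
          = Submodule.span F {v : Fin n × Fin d → F |
              ∃ u₀ ∈ U₀, ∃ e : Fin d → F, v = fun p => u₀ p.1 * e p.2}) :=
  stmt6_general 𝓐 hbimod s U hshrunk
end

section
/- Let F be a field, A ∈ B ≤ M(n,F), and let W* be the limit of the second Wong sequence W₀ = 0, W_i = B(A^{-1}(W_{i-1})). If W* ⊆ im(A), then A^{-1}(W*) is a cork(A)-shrunk subspace of B, where cork(A) = n − rk(A); that is, dim(B(A^{-1}(W*))) ≤ dim(A^{-1}(W*)) − (n − rk(A)). -/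
open Matrix Module

/-!
`A⁻¹(W*)` contains `ker A` and, because `W* ⊆ im A`, is mapped by `A` onto `W*`.
Rank–nullity for `A` restricted to `A⁻¹(W*)` gives
`dim A⁻¹(W*) = dim W* + dim ker A = dim 𝓑(A⁻¹(W*)) + cork A`,
using the fixed-point property `W* = 𝓑(A⁻¹(W*))`.
-/

theorem LinearMap.finrank_comap_of_le_range {K V V₂ : Type*} [DivisionRing K]
    [AddCommGroup V] [Module K V] [AddCommGroup V₂] [Module K V₂] [FiniteDimensional K V]
    (f : V →ₗ[K] V₂) {W : Submodule K V₂} (hW : W ≤ LinearMap.range f) :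
    finrank K (W.comap f) = finrank K W + finrank K (LinearMap.ker f) := by
  have hker : LinearMap.ker f ≤ W.comap f := LinearMap.ker_le_comap f
  have rank_nullity := (f.domRestrict (W.comap f)).finrank_range_add_finrank_ker
  rwa [LinearMap.range_domRestrict, Submodule.map_comap_eq_of_le hW, LinearMap.ker_domRestrict,
    (Submodule.comapSubtypeEquivOfLe hker).finrank_eq, eq_comm] at rank_nullity

theorem Matrix.finrank_ker_mulVecLin {K : Type*} [Field K] {n : ℕ}
    (A : Matrix (Fin n) (Fin n) K) :
    finrank K (LinearMap.ker A.mulVecLin) = n - A.rank := by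
  have rank_nullity := A.mulVecLin.finrank_range_add_finrank_ker
  rw [Module.finrank_fin_fun] at rank_nullity
  exact (Nat.sub_eq_of_eq_add' rank_nullity.symm).symm

theorem stmt8_general {F : Type*} [Field F] {n : ℕ}
    (𝓑 : Submodule F (Matrix (Fin n) (Fin n) F)) (A : Matrix (Fin n) (Fin n) F)
    (Wstar : Submodule F (Fin n → F))
    (hfix : Wstar = Submodule.span F
      {w : Fin n → F | ∃ B ∈ 𝓑, ∃ v ∈ Submodule.comap A.mulVecLin Wstar, w = B.mulVec v})
    (him : Wstar ≤ LinearMap.range A.mulVecLin) :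
    finrank F (Submodule.span F
        {w : Fin n → F | ∃ B ∈ 𝓑, ∃ v ∈ Submodule.comap A.mulVecLin Wstar, w = B.mulVec v})
      + (n - A.rank)
      ≤ finrank F (Submodule.comap A.mulVecLin Wstar) := by
  rw [← hfix, A.mulVecLin.finrank_comap_of_le_range him, A.finrank_ker_mulVecLin]

/-- If the limit `W*` of the second Wong sequence of `(A, 𝓑)` (a fixed point
`W* = 𝓑(A⁻¹(W*))`) is contained in `im(A)`, then `A⁻¹(W*)` is a
`cork(A)`-shrunk subspace of `𝓑`. -/
theorem stmt8 {F : Type*} [Field F] {n : ℕ}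
    (𝓑 : Submodule F (Matrix (Fin n) (Fin n) F)) (A : Matrix (Fin n) (Fin n) F)
    (hA : A ∈ 𝓑) (Wstar : Submodule F (Fin n → F))
    (hfix : Wstar = Submodule.span F
      {w : Fin n → F | ∃ B ∈ 𝓑, ∃ v ∈ Submodule.comap A.mulVecLin Wstar, w = B.mulVec v})
    (him : Wstar ≤ LinearMap.range A.mulVecLin) :
    finrank F (Submodule.span F
        {w : Fin n → F | ∃ B ∈ 𝓑, ∃ v ∈ Submodule.comap A.mulVecLin Wstar, w = B.mulVec v})
      + (n - A.rank)
      ≤ finrank F (Submodule.comap A.mulVecLin Wstar) :=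
  stmt8_general 𝓑 A Wstar hfix him
end

section
/- Let F be a field with |F| > r, let B₁,…,B_m ∈ M(k×ℓ, F), let K be a field extension of F, and S ⊆ F with |S| ≥ r+1. If there exist a₁',…,a_m' ∈ K such that the matrix Σ a_i' B_i (over K) has rank at least r, then there exist a₁,…,a_m ∈ S such that Σ a_i B_i has rank at least r over F. -/
/-!
Fix an `r × r` minor of `Σ aᵢ' Bᵢ` that does not vanish. With the coefficients replaced by
indeterminates `X₁, …, X_m`, this minor becomes a polynomial `P` over `F`, homogeneous of
degree `r`, and `P ≠ 0` because its value at `a'` is nonzero. Since every variable occurs in `P`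
with degree at most `r < |S|`, the combinatorial Nullstellensatz gives a point of `Sᵐ` at which
`P` does not vanish, i.e. coefficients in `S` for which the same minor is nonzero over `F`.
-/

open Matrix MvPolynomial

namespace Matrix

section Minors

variable {F : Type*} [Field F] {m n : Type*} [Fintype n] {r : ℕ}

theorem exists_linearIndependent_col_comp_of_le_rank (M : Matrix m n F) (h : r ≤ M.rank) :
    ∃ g : Fin r → n, LinearIndependent F (M.col ∘ g) := by
  obtain ⟨κ, c, hc, hspan, hli⟩ := exists_linearIndependent' F M.col
  have : Fintype κ := Fintype.ofInjective c hc
  rw [rank_eq_finrank_span_cols, ← hspan, finrank_span_eq_card hli] at h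
  obtain ⟨e⟩ := Function.Embedding.nonempty_of_card_le
    (by simpa using h : Fintype.card (Fin r) ≤ Fintype.card κ)
  exact ⟨c ∘ e, hli.comp e e.injective⟩

theorem exists_det_submatrix_ne_zero_of_le_rank [Fintype m] (M : Matrix m n F)
    (h : r ≤ M.rank) : ∃ (f : Fin r → m) (g : Fin r → n), (M.submatrix f g).det ≠ 0 := by
  obtain ⟨g, hg⟩ := M.exists_linearIndependent_col_comp_of_le_rank h
  have hrank : (M.submatrix id g)ᵀ.rank = r := by
    rw [rank_transpose, rank_eq_finrank_span_cols]
    exact (finrank_span_eq_card hg).trans (Fintype.card_fin r)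
  obtain ⟨f, hf⟩ := (M.submatrix id g)ᵀ.exists_linearIndependent_col_comp_of_le_rank hrank.ge
  exact ⟨f, g, ((isUnit_iff_isUnit_det _).1 (linearIndependent_rows_iff_isUnit.1 hf)).ne_zero⟩

theorem le_rank_of_det_submatrix_ne_zero (M : Matrix m n F) (f : Fin r → m) (g : Fin r → n)
    (h : (M.submatrix f g).det ≠ 0) : r ≤ M.rank := by
  calc r = (M.submatrix f g).rank := by
        rw [rank_of_isUnit _ ((isUnit_iff_isUnit_det _).2 h.isUnit), Fintype.card_fin]
    _ ≤ M.rank := rank_submatrix_le M f g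

end Minors

theorem isHomogeneous_det {σ R n : Type*} [CommRing R] [Fintype n] [DecidableEq n]
    {A : Matrix n n (MvPolynomial σ R)} {d : ℕ} (hA : ∀ i j, (A i j).IsHomogeneous d) :
    A.det.IsHomogeneous (Fintype.card n * d) := by
  rw [det_apply']
  refine IsHomogeneous.sum _ _ _ fun τ _ => ?_
  have hprod := IsHomogeneous.prod Finset.univ (fun i => A (τ i) i) (fun _ => d)
    fun i _ => hA (τ i) i
  rw [Finset.sum_const, smul_eq_mul, Finset.card_univ] at hprod
  have hsign := hprod.C_mul ((Equiv.Perm.sign τ : ℤ) : R)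
  rwa [map_intCast] at hsign

section LinearPencil

variable {ι R : Type*} [Fintype ι] [CommRing R] {m n o : Type*} [Fintype o] [DecidableEq o]

noncomputable def linearPencil (B : ι → Matrix m n R) : Matrix m n (MvPolynomial ι R) :=
  ∑ i, (X i : MvPolynomial ι R) • (B i).map MvPolynomial.C

theorem isHomogeneous_linearPencil_apply (B : ι → Matrix m n R) (a : m) (b : n) :
    (linearPencil B a b).IsHomogeneous 1 := by
  simp only [linearPencil, sum_apply, smul_apply, map_apply, smul_eq_mul, mul_comm (X _)]
  exact IsHomogeneous.sum _ _ _ fun i _ => isHomogeneous_C_mul_X _ i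

theorem isHomogeneous_det_submatrix_linearPencil (B : ι → Matrix m n R) (f : o → m)
    (g : o → n) : ((linearPencil B).submatrix f g).det.IsHomogeneous (Fintype.card o) := by
  simpa using isHomogeneous_det (A := (linearPencil B).submatrix f g)
    fun a b => isHomogeneous_linearPencil_apply B (f a) (g b)

theorem map_aeval_linearPencil {A : Type*} [CommRing A] [Algebra R A] (B : ι → Matrix m n R)
    (x : ι → A) : (linearPencil B).map (aeval x) = ∑ i, x i • (B i).map (algebraMap R A) := by
  ext a b
  simp [linearPencil, sum_apply]

theorem aeval_det_submatrix_linearPencil {A : Type*} [CommRing A] [Algebra R A]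
    (B : ι → Matrix m n R) (x : ι → A) (f : o → m) (g : o → n) :
    aeval x ((linearPencil B).submatrix f g).det
      = ((∑ i, x i • (B i).map (algebraMap R A)).submatrix f g).det := by
  rw [AlgHom.map_det, AlgHom.mapMatrix_apply, ← submatrix_map, map_aeval_linearPencil]

theorem eval_det_submatrix_linearPencil (B : ι → Matrix m n R) (x : ι → R) (f : o → m)
    (g : o → n) :
    eval x ((linearPencil B).submatrix f g).det = ((∑ i, x i • B i).submatrix f g).det := by
  simpa using aeval_det_submatrix_linearPencil B x f g

end LinearPencil

end Matrix

/-- Data reduction: if `Σ aᵢ' Bᵢ` has rank at least `r` for some coefficients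
`aᵢ'` in an extension field `K ⊇ F`, and `S ⊆ F` has at least `r + 1` elements,
then there are coefficients `aᵢ ∈ S` with `Σ aᵢ Bᵢ` of rank at least `r`. -/
theorem stmt14 {F K : Type*} [Field F] [Field K] [Algebra F K]
    {k l m r : ℕ} (B : Fin m → Matrix (Fin k) (Fin l) F)
    (S : Finset F) (hS : r + 1 ≤ S.card)
    (a' : Fin m → K)
    (h : r ≤ (∑ i, a' i • (B i).map (algebraMap F K)).rank) :
    ∃ a : Fin m → F, (∀ i, a i ∈ S) ∧ r ≤ (∑ i, a i • B i).rank := by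
  obtain ⟨f, g, hminor⟩ := exists_det_submatrix_ne_zero_of_le_rank _ h
  set P := ((linearPencil B).submatrix f g).det with hP_def
  have hP : P ≠ 0 := ne_zero_of_map (f := aeval a') <| by
    rwa [hP_def, aeval_det_submatrix_linearPencil]
  have hdeg (i : Fin m) : P.degreeOf i < S.card :=
    calc P.degreeOf i ≤ P.totalDegree := degreeOf_le_totalDegree P i
      _ ≤ r := by simpa using (isHomogeneous_det_submatrix_linearPencil B f g).totalDegree_le
      _ < S.card := hS
  by_contra! hlow
  refine hP (eq_zero_of_eval_zero_at_prod_finset P (fun _ => S) hdeg fun x hx => ?_)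
  by_contra hx0
  refine (hlow x hx).not_ge (le_rank_of_det_submatrix_ne_zero _ f g ?_)
  rwa [hP_def, eval_det_submatrix_linearPencil] at hx0
end

section
/- Let F be a field of characteristic not 2 and let B ≤ M(3,F) be the 3-dimensional space of skew-symmetric 3×3 matrices (Aᵀ = −A). Then every matrix in B is singular (so rk(B) = 2 < 3), yet B has no shrunk subspace: there is no nonzero subspace U ≤ F³ with dim(B(U)) < dim(U). In particular the non-commutative rank of B is 3 while its commutative rank is 2. -/
/-!
A skew-symmetric matrix of odd size has `det A = det Aᵀ = det (-A) = -det A`, hence is singular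
when `2 ≠ 0`. Every cross-product matrix `v ↦ b ⨯₃ v` is skew-symmetric, so `𝓑(U)` contains
`u ⨯₃ v` for all `u ∈ U` and all `v`. For `u ≠ 0` the kernel of `v ↦ u ⨯₃ v` is the line through
`u`, so already a nonzero `U` has `dim 𝓑(U) ≥ 2`; and for `U = F³` the cross products of standard
basis vectors span everything.
-/

open Matrix Module

theorem Matrix.det_eq_zero_of_transpose_eq_neg {n R : Type*} [Fintype n] [DecidableEq n]
    [CommRing R] [NoZeroDivisors R] (h2 : (2 : R) ≠ 0) (hn : Odd (Fintype.card n))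
    {A : Matrix n n R} (hA : Aᵀ = -A) : A.det = 0 := by
  have h : A.det = -A.det := calc
    A.det = Aᵀ.det := (det_transpose A).symm
    _ = -A.det := by rw [hA, det_neg, hn.neg_one_pow, neg_one_mul]
  have h2A : 2 * A.det = 0 := by linear_combination h
  exact (mul_eq_zero.mp h2A).resolve_left h2

theorem Matrix.rank_lt_card_of_det_eq_zero {n K : Type*} [Fintype n] [DecidableEq n] [Field K]
    {A : Matrix n n K} (hA : A.det = 0) : A.rank < Fintype.card n := by
  obtain ⟨v, hv0, hv⟩ := exists_mulVec_eq_zero_iff.mpr hA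
  have hker : 0 < finrank K (LinearMap.ker A.mulVecLin) :=
    finrank_pos_iff_exists_ne_zero.mpr ⟨⟨v, hv⟩, Subtype.coe_ne_coe.mp hv0⟩
  have := LinearMap.finrank_range_add_finrank_ker A.mulVecLin
  rw [finrank_fintype_fun_eq_card] at this
  rw [Matrix.rank]
  omega

section CrossProduct

variable {R F : Type*} [CommRing R] [Field F]

def crossMatrix (u : Fin 3 → R) : Matrix (Fin 3) (Fin 3) R :=
  LinearMap.toMatrix' (crossProduct u)

theorem crossMatrix_mulVec (u v : Fin 3 → R) : crossMatrix u *ᵥ v = u ⨯₃ v :=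
  LinearMap.toMatrix'_mulVec _ v

theorem transpose_crossMatrix (u : Fin 3 → R) : (crossMatrix u)ᵀ = -crossMatrix u := by
  ext i j
  fin_cases i <;> fin_cases j <;> simp [crossMatrix, LinearMap.toMatrix'_apply, cross_apply]

theorem ker_crossProduct {u : Fin 3 → F} (hu : u ≠ 0) :
    LinearMap.ker (crossProduct u) = F ∙ u := by
  ext v
  rw [LinearMap.mem_ker, Submodule.mem_span_singleton, ← not_ne_iff,
    crossProduct_ne_zero_iff_linearIndependent, LinearIndependent.pair_iff' hu]
  push Not
  rfl

theorem finrank_range_crossProduct {u : Fin 3 → F} (hu : u ≠ 0) :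
    finrank F (LinearMap.range (crossProduct u)) = 2 := by
  have := LinearMap.finrank_range_add_finrank_ker (crossProduct u)
  rw [ker_crossProduct hu, finrank_span_singleton hu, finrank_fin_fun] at this
  omega

theorem rank_crossMatrix {u : Fin 3 → F} (hu : u ≠ 0) : (crossMatrix u).rank = 2 := by
  rw [Matrix.rank, ← Matrix.toLin'_apply', crossMatrix, Matrix.toLin'_toMatrix',
    finrank_range_crossProduct hu]

theorem span_crossProduct_eq_top :
    Submodule.span R {w : Fin 3 → R | ∃ u v, w = u ⨯₃ v} = ⊤ := by
  rw [eq_top_iff, ← (Pi.basisFun R (Fin 3)).span_eq, Submodule.span_le]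
  rintro _ ⟨i, rfl⟩
  apply Submodule.subset_span
  fin_cases i
  · exact ⟨Pi.single 1 1, Pi.single 2 1, by ext j; fin_cases j <;> simp [cross_apply]⟩
  · exact ⟨Pi.single 2 1, Pi.single 0 1, by ext j; fin_cases j <;> simp [cross_apply]⟩
  · exact ⟨Pi.single 0 1, Pi.single 1 1, by ext j; fin_cases j <;> simp [cross_apply]⟩

theorem finrank_le_finrank_span_crossProduct (U : Submodule F (Fin 3 → F)) :
    finrank F U ≤ finrank F (Submodule.span F {w | ∃ u ∈ U, ∃ v, w = u ⨯₃ v}) := by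
  set S := Submodule.span F {w | ∃ u ∈ U, ∃ v, w = u ⨯₃ v}
  rcases eq_or_ne U ⊥ with rfl | hU
  · simp
  obtain ⟨u, huU, hu⟩ := Submodule.exists_mem_ne_zero_of_ne_bot hU
  have h2S : 2 ≤ finrank F S := by
    rw [← finrank_range_crossProduct hu]
    refine Submodule.finrank_mono ?_
    rintro _ ⟨v, rfl⟩
    exact Submodule.subset_span ⟨u, huU, v, rfl⟩
  have hU3 : finrank F U ≤ 3 := (Submodule.finrank_le U).trans_eq (finrank_fin_fun F)
  rcases hU3.lt_or_eq with hU3 | hU3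
  · omega
  have hUtop : U = ⊤ := Submodule.eq_top_of_finrank_eq (by rw [hU3, finrank_fin_fun])
  have hStop : S = ⊤ := by
    rw [eq_top_iff, ← span_crossProduct_eq_top]
    refine Submodule.span_mono ?_
    rintro _ ⟨u, v, rfl⟩
    exact ⟨u, hUtop ▸ Submodule.mem_top, v, rfl⟩
  rw [hStop, finrank_top, finrank_fin_fun, hU3]

end CrossProduct

/-- The space `𝓑` of skew-symmetric `3×3` matrices over a field of
characteristic `≠ 2`: every matrix in `𝓑` is singular, the maximal rank is `2`,
yet `𝓑` has no shrunk subspace (no subspace `U` with `dim 𝓑(U) < dim U`); so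
`ncrk(𝓑) = 3` while `rk(𝓑) = 2`. -/
theorem stmt15 {F : Type*} [Field F] (h2 : (2 : F) ≠ 0)
    (𝓑 : Submodule F (Matrix (Fin 3) (Fin 3) F))
    (h𝓑 : ∀ B : Matrix (Fin 3) (Fin 3) F, B ∈ 𝓑 ↔ Bᵀ = -B) :
    (∀ B ∈ 𝓑, B.det = 0) ∧
    (∀ B ∈ 𝓑, B.rank ≤ 2) ∧
    (∃ B ∈ 𝓑, B.rank = 2) ∧
    (∀ U : Submodule F (Fin 3 → F),
      ¬ finrank F (Submodule.span F
          {w : Fin 3 → F | ∃ B ∈ 𝓑, ∃ u ∈ U, w = B.mulVec u}) < finrank F U) := by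
  have hdet : ∀ B ∈ 𝓑, B.det = 0 := fun B hB =>
    det_eq_zero_of_transpose_eq_neg h2 (by decide) ((h𝓑 B).mp hB)
  have hcross : ∀ b, crossMatrix b ∈ 𝓑 := fun b => (h𝓑 _).mpr (transpose_crossMatrix b)
  refine ⟨hdet, fun B hB => Nat.le_of_lt_succ ?_,
    ⟨crossMatrix (Pi.single 0 1), hcross _, rank_crossMatrix (by simp)⟩, fun U => not_lt.mpr ?_⟩
  · simpa using rank_lt_card_of_det_eq_zero (hdet B hB)
  refine (finrank_le_finrank_span_crossProduct U).trans
    (Submodule.finrank_mono (Submodule.span_mono ?_))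
  rintro _ ⟨u, huU, v, rfl⟩
  refine ⟨crossMatrix (-v), hcross _, u, huU, ?_⟩
  rw [crossMatrix_mulVec, map_neg, LinearMap.neg_apply, cross_anticomm]
end

section
/- Let F be a field with |F| > n, let A, C ∈ M(n,F), and let B = span{A, C}. If there exists i ∈ [n] such that (B A^{-1})^i(0) ⊄ im(A) — i.e. the second Wong sequence of (A, B) escapes the image of A — then rk(A) < rk(B), i.e. some matrix of the form A + λC (λ ∈ F) or C has rank strictly greater than rk(A). -/
/-!
For `c ≠ 0` the whole Wong sequence lies in `im (A + c • C)`: if `A v` lies there, so does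
`C v = c⁻¹ • ((A + c • C) v - A v)`, hence so does `B v` for every `B ∈ span {A, C}`.
Take `w` in the sequence outside `im A` and a basis `A z₁, …, A z_r` of `im A`. The vectors
`w, A zₜ + c • C zₜ` lie in `im (A + c • C)` and are independent at `c = 0`. Multiplying by a
left inverse of the matrix with columns `w, A zₜ`, their independence for a given `c` follows from
`det (1 + c • Q) ≠ 0`, where `Q` has a zero column (the one of `w`). This is a polynomial in `c`
of degree at most `r` with constant term `1`, so as `|F| > n ≥ r + 1` it has a nonzero non-root
`c`, and then `rk (A + c • C) ≥ r + 1`.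
-/

open Matrix Module

/-- The second Wong sequence of `(A, 𝓑)`: `W₀ = 0`, `W_{i+1} = 𝓑(A⁻¹(W_i))`. -/
def wongSeq {F : Type*} [Field F] {n : ℕ}
    (𝓑 : Submodule F (Matrix (Fin n) (Fin n) F)) (A : Matrix (Fin n) (Fin n) F) :
    ℕ → Submodule F (Fin n → F)
  | 0 => ⊥
  | i + 1 => Submodule.span F
      {w : Fin n → F | ∃ B ∈ 𝓑, ∃ v : Fin n → F,
        A.mulVec v ∈ wongSeq 𝓑 A i ∧ w = B.mulVec v}

open Polynomial Cardinal

section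

variable {F : Type*} [Field F]

theorem Matrix.exists_ne_zero_det_add_smul_ne_zero {k : Type*} [Fintype k] [DecidableEq k]
    {P Q : Matrix k k F} (hP : P.det ≠ 0) (hQ : Q.det = 0)
    (hF : (Fintype.card k : Cardinal) < #F) :
    ∃ c : F, c ≠ 0 ∧ (P + c • Q).det ≠ 0 := by
  -- `p` evaluates to `det (P + c • Q)`; its coefficient of degree `card k` is `det Q = 0`.
  set p : F[X] := det ((X : F[X]) • Q.map C + P.map C)
  have hp : p ≠ 0 := fun h => hP <| by
    rw [← coeff_det_X_add_C_zero Q P, show det _ = p from rfl, h, coeff_zero]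
  have hdeg : p.natDegree < Fintype.card k := by
    refine (natDegree_det_X_add_C_le Q P).lt_of_ne fun h => hp ?_
    rw [← leadingCoeff_eq_zero, leadingCoeff, h, coeff_det_X_add_C_card, hQ]
  obtain ⟨c, hc⟩ := (X * p).exists_eval_ne_zero_of_natDegree_lt_card (mul_ne_zero X_ne_zero hp)
    (by rw [natDegree_X_mul hp]; exact lt_of_le_of_lt (by exact_mod_cast hdeg) hF)
  rw [eval_mul, eval_X] at hc
  refine ⟨c, left_ne_zero_of_mul hc, ?_⟩
  have := right_ne_zero_of_mul hc
  rw [← coe_evalRingHom, RingHom.map_det] at this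
  convert this using 2
  ext i j
  simp only [RingHom.mapMatrix_apply, map_apply, add_apply, smul_apply, coe_evalRingHom,
    eval_add, eval_C, smul_eq_mul, eval_mul, eval_X]
  ring

theorem Matrix.exists_mul_eq_one_of_injective_mulVec {m k : Type*} [Fintype m] [Fintype k]
    [DecidableEq k] {M : Matrix m k F} (hM : Function.Injective M.mulVec) :
    ∃ L : Matrix k m F, L * M = 1 := by
  classical
  obtain ⟨g, hg⟩ := M.mulVecLin.exists_leftInverse_of_injective (LinearMap.ker_eq_bot.mpr hM)
  refine ⟨LinearMap.toMatrix' g, ?_⟩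
  rw [← LinearMap.toMatrix'_toLin' M, ← LinearMap.toMatrix'_comp, Matrix.toLin'_apply', hg,
    LinearMap.toMatrix'_id]

theorem exists_ne_zero_linearIndependent_add_smul {m ι : Type*} [Fintype m] [Fintype ι]
    [DecidableEq ι] {a b : ι → m → F} (ha : LinearIndependent F a) (hb : ∃ j, b j = 0)
    (hF : (Fintype.card ι : Cardinal) < #F) :
    ∃ c : F, c ≠ 0 ∧ LinearIndependent F (a + c • b) := by
  obtain ⟨L, hL⟩ :=
    exists_mul_eq_one_of_injective_mulVec (M := (of a)ᵀ) (mulVec_injective_iff.mpr ha)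
  obtain ⟨j, hj⟩ := hb
  have hQ : (L * (of b)ᵀ).det = 0 :=
    det_eq_zero_of_column_eq_zero j fun i => by simp [mul_apply, hj]
  obtain ⟨c, hc, hdet⟩ :=
    exists_ne_zero_det_add_smul_ne_zero (P := L * (of a)ᵀ) (by simp [hL]) hQ hF
  refine ⟨c, hc, ?_⟩
  rw [← Matrix.mul_smul, ← Matrix.mul_add] at hdet
  have hinj : Function.Injective ((of a)ᵀ + c • (of b)ᵀ).mulVec := fun x y hxy =>
    mulVec_injective_of_det_ne_zero hdet (by simp only [← mulVec_mulVec, hxy])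
  exact mulVec_injective_iff.mp hinj

section Wong

variable {n : ℕ} {A C : Matrix (Fin n) (Fin n) F} {c : F}

theorem mulVec_mem_range_add_smul_of_mem_span_pair (hc : c ≠ 0) {B : Matrix (Fin n) (Fin n) F}
    (hB : B ∈ Submodule.span F {A, C}) {v : Fin n → F}
    (hv : A *ᵥ v ∈ LinearMap.range (A + c • C).mulVecLin) :
    B *ᵥ v ∈ LinearMap.range (A + c • C).mulVecLin := by
  have hCv : C *ᵥ v = c⁻¹ • ((A + c • C) *ᵥ v - A *ᵥ v) := by
    rw [add_mulVec, smul_mulVec, add_sub_cancel_left, smul_smul, inv_mul_cancel₀ hc, one_smul]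
  obtain ⟨a, b, rfl⟩ := Submodule.mem_span_pair.mp hB
  rw [add_mulVec, smul_mulVec, smul_mulVec, hCv]
  exact add_mem (Submodule.smul_mem _ _ hv) <| Submodule.smul_mem _ _ <| Submodule.smul_mem _ _ <|
    sub_mem (LinearMap.mem_range_self _ v) hv

theorem wongSeq_le_range_add_smul (hc : c ≠ 0) (i : ℕ) :
    wongSeq (Submodule.span F {A, C}) A i ≤ LinearMap.range (A + c • C).mulVecLin := by
  induction i with
  | zero => exact bot_le
  | succ i ih =>
    refine Submodule.span_le.mpr ?_
    rintro _ ⟨B, hB, v, hv, rfl⟩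
    exact mulVec_mem_range_add_smul_of_mem_span_pair hc hB (ih hv)

end Wong

theorem Matrix.exists_rank_lt_rank_add_smul {n : ℕ} (hF : (n : Cardinal) < #F)
    {A C : Matrix (Fin n) (Fin n) F} {w : Fin n → F} (hwA : w ∉ LinearMap.range A.mulVecLin)
    (hw : ∀ c : F, c ≠ 0 → w ∈ LinearMap.range (A + c • C).mulVecLin) :
    ∃ c : F, A.rank < (A + c • C).rank := by
  set R := LinearMap.range A.mulVecLin
  set r := A.rank
  have hrn : r + 1 ≤ n := by
    have := Submodule.finrank_lt (s := R) fun h => hwA (h ▸ Submodule.mem_top)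
    rwa [finrank_fin_fun] at this
  set u := Module.finBasis F R
  choose z hz using fun t => (u t).2
  let a : Fin (r + 1) → Fin n → F := Fin.cons w fun t => A *ᵥ z t
  let b : Fin (r + 1) → Fin n → F := Fin.cons 0 fun t => C *ᵥ z t
  have ha : LinearIndependent F a := by
    have hu : LinearIndependent F fun t => A *ᵥ z t := by
      simp only [← mulVecLin_apply, hz]
      exact u.linearIndependent.map' R.subtype R.ker_subtype
    refine linearIndependent_finCons.mpr ⟨hu, fun hmem => hwA ?_⟩
    exact Submodule.span_le.mpr
      (Set.range_subset_iff.mpr fun t => LinearMap.mem_range_self _ (z t)) hmem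
  obtain ⟨c, hc, hli⟩ :=
    exists_ne_zero_linearIndependent_add_smul (b := b) ha ⟨0, Fin.cons_zero _ _⟩
      (by simpa using (Nat.cast_le.mpr hrn).trans_lt hF)
  refine ⟨c, ?_⟩
  have hmem : ∀ j, (a + c • b) j ∈ LinearMap.range (A + c • C).mulVecLin := by
    refine Fin.cases (by simpa [a, b] using hw c hc) fun t => ⟨z t, ?_⟩
    simp [a, b]
  calc r < r + 1 := r.lt_succ_self
    _ = finrank F (Submodule.span F (Set.range (a + c • b))) := by
      rw [finrank_span_eq_card hli, Fintype.card_fin]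
    _ ≤ (A + c • C).rank :=
      Submodule.finrank_mono (Submodule.span_le.mpr (Set.range_subset_iff.mpr hmem))

end

/-- If `|F| > n` and the second Wong sequence of `(A, span{A,C})` escapes
`im(A)` at some step `i ∈ [n]`, then `A` does not have maximal rank in the
pencil: some `A + λC` or `C` has rank strictly larger than `rk(A)`. -/
theorem stmt19 {F : Type*} [Field F] {n : ℕ} (hF : (n : Cardinal) < Cardinal.mk F)
    (A C : Matrix (Fin n) (Fin n) F)
    (hescape : ∃ i : ℕ, 1 ≤ i ∧ i ≤ n ∧
      ¬ wongSeq (Submodule.span F {A, C}) A i ≤ LinearMap.range A.mulVecLin) :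
    (∃ lam : F, A.rank < (A + lam • C).rank) ∨ A.rank < C.rank := by
  obtain ⟨i, -, -, hi⟩ := hescape
  obtain ⟨w, hwW, hwA⟩ := SetLike.not_le_iff_exists.mp hi
  exact Or.inl <| exists_rank_lt_rank_add_smul hF hwA fun c hc => wongSeq_le_range_add_smul hc i hwW
end
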